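/- arXiv:2105.11719 — 2 statements merged into one kernel-verified Lean document; each statement's English description precedes it below -/
import Mathlib

section
/- Let N ≥ 2 and let l ≥ 2 be an integer with l² ∣ N. Then the constant 2l-tuple (N/l mod N, …, N/l mod N) of elements of ℤ/Nℤ is a solution of (E_N); more precisely, M_{2l}(N/l, …, N/l) = (−1)^l · Id in SL_2(ℤ/Nℤ). -/
open Matrix

/-- `Mmat [a₁, …, aₙ]` is the product `[[aₙ,-1],[1,0]] ⋯ [[a₁,-1],[1,0]]`. -/
def Mmat {R : Type*} [CommRing R] : List R → Matrix (Fin 2) (Fin 2) R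
  | [] => 1
  | a :: t => Mmat t * !![a, -1; 1, 0]

/-- A tuple is a solution of (E_N) if its matrix is `Id` or `-Id`. -/
def IsSolution {R : Type*} [CommRing R] (l : List R) : Prop :=
  Mmat l = 1 ∨ Mmat l = -1

/-- The sum `(a₁,…,aₙ) ⊕ (b₁,…,bₘ) = (a₁+bₘ, a₂,…,aₙ₋₁, aₙ+b₁, b₂,…,bₘ₋₁)`. -/
def oplus {R : Type*} [CommRing R] (a b : List R) : List R :=
  List.ofFn (fun i : Fin (a.length + b.length - 2) =>
    if (i : ℕ) = 0 then a.getD 0 0 + b.getD (b.length - 1) 0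
    else if (i : ℕ) < a.length - 1 then a.getD (i : ℕ) 0
    else if (i : ℕ) = a.length - 1 then a.getD (a.length - 1) 0 + b.getD 0 0
    else b.getD ((i : ℕ) - a.length + 1) 0)

/-- Two tuples are equivalent if one is a cyclic permutation of the other or of
its reversal. -/
def TupleEquiv {R : Type*} (a b : List R) : Prop :=
  (∃ k, b = a.rotate k) ∨ (∃ k, b = a.reverse.rotate k)

/-- A solution `c` (of size ≥ 3) is reducible if `c ∼ a ⊕ b` with `b` a solution,
`a` of size ≥ 3 and `b` of size ≥ 3. -/
def Reducible {R : Type*} [CommRing R] (c : List R) : Prop :=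
  ∃ a b : List R, 3 ≤ a.length ∧ 3 ≤ b.length ∧ IsSolution b ∧
    TupleEquiv c (oplus a b)

/-- The alternating tuple `(k, -k, k, -k, …)` of length `n`. -/
def altList {R : Type*} [CommRing R] (n : ℕ) (k : R) : List R :=
  List.ofFn (fun i : Fin n => if (i : ℕ) % 2 = 0 then k else -k)

/-- Continuants: `K₋₁ = 0`, `K₀ = 1`,
`Kₙ(x₁,…,xₙ) = x₁·Kₙ₋₁(x₂,…,xₙ) - Kₙ₋₂(x₃,…,xₙ)`. -/
def contK {R : Type*} [CommRing R] : List R → R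
  | [] => 1
  | [x] => x
  | x :: y :: t => x * contK (y :: t) - contK t

/-! Since `a² = 0`, the square of `!![a, -1; 1, 0]` is `-(1 + ε)` with `ε = a • !![0, 1; -1, 0]`
square-zero, so its `l`-th power is `(-1)^l (1 + l a • !![0, 1; -1, 0])`; when `l a = 0` this is
`(-1)^l`. For `a = N / l` in `ℤ/Nℤ` both conditions follow from `l² ∣ N`. -/

lemma Mmat_replicate {R : Type*} [CommRing R] (a : R) :
    ∀ n, Mmat (List.replicate n a) = !![a, -1; 1, 0] ^ n
  | 0 => rfl
  | n + 1 => by rw [List.replicate_succ, Mmat, Mmat_replicate a n, pow_succ]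

lemma one_add_pow_of_sq_eq_zero {R : Type*} [Semiring R] {x : R} (hx : x ^ 2 = 0) :
    ∀ n : ℕ, (1 + x) ^ n = 1 + n • x
  | 0 => by simp
  | n + 1 => by
    rw [pow_succ, one_add_pow_of_sq_eq_zero hx n]
    simp only [add_mul, mul_add, one_mul, mul_one, smul_mul_assoc, ← sq, hx, smul_zero, succ_nsmul]
    abel

lemma sq_matrix_of_sq_eq_zero {R : Type*} [CommRing R] {a : R} (ha : a ^ 2 = 0) :
    !![a, -1; 1, 0] ^ 2 = -(1 + a • !![0, 1; -1, 0]) := by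
  rw [sq, Matrix.mul_fin_two, ← sq, ha, Matrix.one_fin_two, Matrix.smul_of, Matrix.smul_cons]
  ext i j
  fin_cases i <;> fin_cases j <;> simp

lemma Mmat_replicate_two_mul {R : Type*} [CommRing R] {a : R} {l : ℕ}
    (ha : a ^ 2 = 0) (hla : (l : R) * a = 0) :
    Mmat (List.replicate (2 * l) a) = (-1) ^ l := by
  have hε : (a • !![(0 : R), 1; -1, 0]) ^ 2 = 0 := by
    rw [smul_pow, ha, zero_smul]
  rw [Mmat_replicate, pow_mul, sq_matrix_of_sq_eq_zero ha, neg_pow, one_add_pow_of_sq_eq_zero hε,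
    ← Nat.cast_smul_eq_nsmul R, smul_smul, hla, zero_smul, add_zero, mul_one]

theorem replicate_div_sq_solution_general (N l : ℕ) (hdvd : l ^ 2 ∣ N) :
    Mmat (List.replicate (2 * l) ((N / l : ℕ) : ZMod N)) = (-1) ^ l ∧
    IsSolution (List.replicate (2 * l) ((N / l : ℕ) : ZMod N)) := by
  have hlN : l ∣ N := (dvd_pow_self l two_ne_zero).trans hdvd
  have ha : ((N / l : ℕ) : ZMod N) ^ 2 = 0 := by
    rw [← Nat.cast_pow, ZMod.natCast_eq_zero_iff, Nat.div_pow hlN, sq N,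
      Nat.mul_div_assoc N hdvd]
    exact dvd_mul_right _ _
  have hla : (l : ZMod N) * ((N / l : ℕ) : ZMod N) = 0 := by
    rw [← Nat.cast_mul, Nat.mul_div_cancel' hlN, ZMod.natCast_self]
  have hM := Mmat_replicate_two_mul ha hla
  exact ⟨hM, by rw [IsSolution, hM]; exact neg_one_pow_eq_or _ l⟩

theorem replicate_div_sq_solution (N l : ℕ) (hN : 2 ≤ N) (hl : 2 ≤ l) (hdvd : l ^ 2 ∣ N) :
    Mmat (List.replicate (2 * l) ((N / l : ℕ) : ZMod N)) = (-1) ^ l ∧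
    IsSolution (List.replicate (2 * l) ((N / l : ℕ) : ZMod N)) :=
  replicate_div_sq_solution_general N l hdvd
end

section
/- Let N be a prime number with N ≥ 5 such that N ≢ 1 (mod 12) and N ≢ −1 (mod 12). Let n be the least even positive integer such that the alternating n-tuple (2, −2, 2, −2, …, 2, −2) of elements of ℤ/Nℤ is a solution of (E_N). Then this alternating n-tuple (2, −2, …, 2, −2) is an irreducible solution of (E_N). -/
open Matrix

/-!
Let `C = Mmat [2, -2] = !![-5, 2; 2, -1]`. The matrix of an alternating block `(2, -2, …, 2, -2)`
of length `2m` is `C ^ m = α + β C`, and `det C = 1` gives `α² - 6αβ + β² = 1`.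

If `altList n 2 ∼ a ⊕ b` with `b` a solution, the inner entries of `b` form an alternating block
of length `j`, `1 ≤ j ≤ n - 3`, with entries `±2`; since `(Mmat b)₁₁` is minus the `(0,0)`-entry of
the block's matrix, that entry is `±1`. Changing the sign of the entries does not change the
square of that entry, so we may take the block to start with `2`. For odd `j` this gives
`(3α - 17β)² = 3`, impossible since `3` is a non-residue modulo `N` when `N ≡ ±5 (mod 12)`.
For even `j = 2m` it gives `β = 0` or `α = 6β`, i.e. `C ^ m = ±1` or `C ^ (m + 1) = ±1`,
contradicting the minimality of `n`.
-/

section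

variable {R : Type*} [CommRing R]

lemma Mmat_append (l₁ l₂ : List R) : Mmat (l₁ ++ l₂) = Mmat l₂ * Mmat l₁ := by
  induction l₁ with
  | nil => simp [Mmat]
  | cons a t ih => simp [Mmat, ih, mul_assoc]

lemma Mmat_map_neg (l : List R) :
    Mmat (l.map Neg.neg) =
      (-1 : R) ^ l.length • (diagonal ![1, -1] * Mmat l * diagonal ![1, -1]) := by
  induction l with
  | nil => ext i j; fin_cases i <;> fin_cases j <;> simp [Mmat]
  | cons a t ih =>
    simp only [List.map_cons, Mmat, ih, List.length_cons, pow_succ]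
    ext i j
    fin_cases i <;> fin_cases j <;> simp [mul_apply, Fin.sum_univ_two] <;> ring

lemma Mmat_map_neg_zero_zero (l : List R) :
    Mmat (l.map Neg.neg) 0 0 = (-1) ^ l.length * Mmat l 0 0 := by
  simp [Mmat_map_neg, mul_apply, Fin.sum_univ_two]

lemma altList_eq_ofFn (n : ℕ) (k : R) :
    altList n k = List.ofFn (fun i : Fin n => (-1) ^ (i : ℕ) * k) := by
  unfold altList
  congr 1
  funext i
  rcases Nat.even_or_odd (i : ℕ) with h | h
  · simp [h.neg_one_pow, Nat.even_iff.mp h]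
  · simp [h.neg_one_pow, Nat.odd_iff.mp h]

@[simp] lemma altList_length (n : ℕ) (k : R) : (altList n k).length = n := List.length_ofFn

@[simp] lemma getElem_altList (n : ℕ) (k : R) (i : ℕ) (hi : i < (altList n k).length) :
    (altList n k)[i] = (-1) ^ i * k := by
  simp [altList_eq_ofFn]

lemma altList_succ (n : ℕ) (k : R) : altList (n + 1) k = altList n k ++ [(-1) ^ n * k] := by
  rw [altList_eq_ofFn, altList_eq_ofFn, List.ofFn_succ', List.concat_eq_append]
  rfl

lemma altList_neg (n : ℕ) (k : R) : altList n (-k) = (altList n k).map Neg.neg := by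
  simp [altList_eq_ofFn, List.map_ofFn, Function.comp_def]

lemma altList_drop (n d : ℕ) (k : R) : (altList n k).drop d = altList (n - d) ((-1) ^ d * k) := by
  apply List.ext_getElem (by simp)
  intro i _ _
  simp only [List.getElem_drop, getElem_altList, pow_add]
  ring

lemma altList_rotate {n : ℕ} (hn : Even n) (k : R) (r : ℕ) :
    (altList n k).rotate r = altList n ((-1) ^ r * k) := by
  apply List.ext_getElem (by simp)
  intro i hi _
  simp only [List.length_rotate, altList_length] at hi
  rw [List.getElem_rotate]
  simp only [getElem_altList, altList_length, ← mul_assoc, ← pow_add]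
  congr 1
  apply neg_one_pow_congr
  simp only [Nat.even_iff, Nat.mod_mod_of_dvd _ (even_iff_two_dvd.mp hn)]

lemma altList_reverse {n : ℕ} (hn : Even n) (k : R) : (altList n k).reverse = altList n (-k) := by
  apply List.ext_getElem (by simp)
  intro i hi _
  simp only [List.length_reverse, altList_length] at hi
  rw [List.getElem_reverse]
  simp only [getElem_altList, altList_length, neg_eq_neg_one_mul k, ← mul_assoc]
  rw [← pow_succ]
  congr 1
  apply neg_one_pow_congr
  obtain ⟨s, rfl⟩ := hn
  simp only [Nat.even_iff]
  omega

lemma TupleEquiv.exists_eq_altList {n : ℕ} (hn : Even n) {k : R} {c : List R}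
    (h : TupleEquiv (altList n k) c) : ∃ r : ℕ, c = altList n ((-1) ^ r * k) := by
  rcases h with ⟨r, rfl⟩ | ⟨r, rfl⟩
  · exact ⟨r, altList_rotate hn k r⟩
  · refine ⟨r + 1, ?_⟩
    rw [altList_reverse hn, altList_rotate hn]
    ring_nf

lemma oplus_drop_length {a : List R} (ha : a ≠ []) (b : List R) :
    (oplus a b).drop a.length = b.tail.dropLast := by
  replace ha : a.length ≠ 0 := by simpa using ha
  apply List.ext_getElem
  · simp only [oplus, List.length_drop, List.length_ofFn, List.length_dropLast, List.length_tail]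
    omega
  · intro i h₁ h₂
    simp only [List.length_tail, List.length_dropLast] at h₂
    simp [oplus, ha, List.getElem?_eq_getElem (show i + 1 < b.length by omega),
      show ¬a.length + i < a.length - 1 by omega, show a.length + i ≠ a.length - 1 by omega]

lemma IsSolution.Mmat_tail_dropLast_sq {b : List R} (hb : IsSolution b) (hlen : 2 ≤ b.length) :
    Mmat b.tail.dropLast 0 0 ^ 2 = 1 := by
  obtain ⟨x, t, rfl⟩ := List.exists_cons_of_length_pos (by omega : 0 < b.length)
  have ht : t ≠ [] := List.ne_nil_of_length_pos (by simp at hlen; omega)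
  rw [← List.dropLast_append_getLast ht] at hb
  have h11 : Mmat (x :: (t.dropLast ++ [t.getLast ht])) 1 1 = -Mmat t.dropLast 0 0 := by
    simp [Mmat, Mmat_append, mul_apply, Fin.sum_univ_two, vecMul, dotProduct]
  rw [List.tail_cons, ← neg_sq, ← h11]
  rcases hb with h | h <;> simp [h]

lemma Reducible.exists_altList {n : ℕ} (hn : Even n) {k : R} (h : Reducible (altList n k)) :
    ∃ j, 1 ≤ j ∧ j + 3 ≤ n ∧ Mmat (altList j k) 0 0 ^ 2 = 1 := by
  obtain ⟨a, b, ha, hb, hsol, hequiv⟩ := h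
  obtain ⟨r, hr⟩ := hequiv.exists_eq_altList hn
  have hlen : a.length + b.length - 2 = n := by simpa [oplus] using congrArg List.length hr
  have hmid : b.tail.dropLast = altList (b.length - 2) ((-1) ^ (a.length + r) * k) := by
    rw [← oplus_drop_length (a := a) (List.ne_nil_of_length_pos (by omega)), hr, altList_drop,
      pow_add, mul_assoc]
    congr 1
    omega
  refine ⟨b.length - 2, by omega, by omega, ?_⟩
  have hsq := hsol.Mmat_tail_dropLast_sq (by omega)
  rw [hmid] at hsq
  rcases neg_one_pow_eq_or R (a.length + r) with hs | hs
  · simpa [hs] using hsq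
  · rwa [hs, neg_one_mul, altList_neg, Mmat_map_neg_zero_zero, mul_pow, ← pow_mul,
      (even_two.mul_left _).neg_one_pow, one_mul] at hsq

lemma Mmat_altList_two_mul_add_one (m : ℕ) (k : R) :
    Mmat (altList (2 * m + 1) k) = !![k, -1; 1, 0] * Mmat (altList (2 * m) k) := by
  rw [altList_succ, Mmat_append, (even_two_mul m).neg_one_pow, one_mul]
  simp [Mmat]

lemma Mmat_altList_two_mul_add_two (m : ℕ) (k : R) :
    Mmat (altList (2 * m + 2) k) = !![-k ^ 2 - 1, k; k, -1] * Mmat (altList (2 * m) k) := by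
  rw [altList_succ, Mmat_append, (Nat.odd_iff.mpr (by omega)).neg_one_pow,
    Mmat_altList_two_mul_add_one, ← mul_assoc]
  congr 1
  ext i j
  fin_cases i <;> fin_cases j <;> simp [Mmat]
  ring

lemma isSolution_of_Mmat_eq_scalar [IsDomain R] {l : List R} {c : R} (hc : c ^ 2 = 1)
    (hl : Mmat l = !![c, 0; 0, c]) : IsSolution l := by
  rcases sq_eq_one_iff.mp hc with rfl | rfl
  · exact Or.inl (by rw [hl]; exact (one_fin_two).symm)
  · exact Or.inr (by rw [hl]; ext i j; fin_cases i <;> fin_cases j <;> simp)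

lemma exists_Mmat_altList_two_mul (m : ℕ) : ∃ α β : R, α ^ 2 - 6 * α * β + β ^ 2 = 1 ∧
    Mmat (altList (2 * m) (2 : R)) = !![α - 5 * β, 2 * β; 2 * β, α - β] := by
  induction m with
  | zero =>
    refine ⟨1, 0, by ring, ?_⟩
    ext i j
    fin_cases i <;> fin_cases j <;> simp [altList_eq_ofFn, Mmat]
  | succ m ih =>
    obtain ⟨α, β, hnorm, hM⟩ := ih
    refine ⟨-β, α - 6 * β, by linear_combination hnorm, ?_⟩
    rw [Nat.mul_succ, Mmat_altList_two_mul_add_two, hM]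
    ext i j
    fin_cases i <;> fin_cases j <;> simp [mul_apply, Fin.sum_univ_two] <;> ring

lemma isSquare_three_of_Mmat_altList_two_mul_add_one_sq (m : ℕ)
    (h : Mmat (altList (2 * m + 1) (2 : R)) 0 0 ^ 2 = 1) : IsSquare (3 : R) := by
  obtain ⟨α, β, hnorm, hM⟩ := exists_Mmat_altList_two_mul (R := R) m
  have h' : (2 * (α - 5 * β) - 2 * β) ^ 2 = 1 := by
    simpa [Mmat_altList_two_mul_add_one, hM, mul_apply, Fin.sum_univ_two, sub_eq_add_neg] using h
  exact ⟨3 * α - 17 * β, by linear_combination -hnorm - 2 * h'⟩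

lemma isSolution_altList_two_of_Mmat_sq [IsDomain R] (h2 : (2 : R) ≠ 0) (m : ℕ)
    (h : Mmat (altList (2 * m) (2 : R)) 0 0 ^ 2 = 1) :
    IsSolution (altList (2 * m) (2 : R)) ∨ IsSolution (altList (2 * m + 2) (2 : R)) := by
  obtain ⟨α, β, hnorm, hM⟩ := exists_Mmat_altList_two_mul (R := R) m
  simp only [hM, of_apply, cons_val', cons_val_zero, empty_val', cons_val_fin_one] at h
  have hβ : 4 * (β * (β - (α - 5 * β))) = 0 := by linear_combination h - hnorm
  rcases mul_eq_zero.mp hβ with h4 | h4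
  · exact absurd h4 (by simpa [show (4 : R) = 2 * 2 by norm_num] using h2)
  rcases mul_eq_zero.mp h4 with hβ0 | hβα
  · left
    subst hβ0
    exact isSolution_of_Mmat_eq_scalar (by simpa using h) (by simp [hM])
  · right
    have hα : α = 6 * β := by linear_combination -hβα
    subst hα
    refine isSolution_of_Mmat_eq_scalar (c := -β) (by linear_combination h) ?_
    rw [Mmat_altList_two_mul_add_two, hM]
    ext i j
    fin_cases i <;> fin_cases j <;> simp [mul_apply, Fin.sum_univ_two] <;> ring

end

lemma ZMod.not_isSquare_three {p : ℕ} [Fact p.Prime] (hp : p % 12 = 5 ∨ p % 12 = 7) :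
    ¬IsSquare (3 : ZMod p) := by
  have h3 : (3 : ZMod p) = ((3 : ℕ) : ZMod p) := by norm_cast
  rcases hp with hp | hp
  · rw [h3, ZMod.exists_sq_eq_prime_iff_of_mod_four_eq_one (by omega) (by norm_num),
      ← ZMod.natCast_mod, show p % 3 = 2 by omega]
    decide
  · rw [h3, ZMod.exists_sq_eq_prime_iff_of_mod_four_eq_three (by omega) (by norm_num) (by omega),
      ← ZMod.natCast_mod, show p % 3 = 1 by omega, not_not]
    exact ⟨1, by decide⟩

theorem two_dynomial_minimal_irreducible (N : ℕ) (hp : N.Prime) (hN : 5 ≤ N)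
    (h1 : N % 12 ≠ 1) (h11 : N % 12 ≠ 11)
    (n : ℕ)
    (hn : IsLeast {m : ℕ | 0 < m ∧ Even m ∧ IsSolution (altList m (2 : ZMod N))} n) :
    IsSolution (altList n (2 : ZMod N)) ∧ ¬ Reducible (altList n (2 : ZMod N)) := by
  have : Fact N.Prime := ⟨hp⟩
  obtain ⟨⟨-, hn_even, hn_sol⟩, hn_min⟩ := hn
  refine ⟨hn_sol, fun hred => ?_⟩
  have h3 : ¬IsSquare (3 : ZMod N) := by
    apply ZMod.not_isSquare_three
    have := hp.eq_one_or_self_of_dvd 2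
    have := hp.eq_one_or_self_of_dvd 3
    omega
  obtain ⟨j, hj1, hjn, hj⟩ := hred.exists_altList hn_even
  obtain ⟨m, rfl | rfl⟩ := Nat.even_or_odd' j
  · -- in characteristic 2 the element 3 = 1 would be a square
    have h2 : (2 : ZMod N) ≠ 0 := fun h => h3 ⟨1, by linear_combination h⟩
    rcases isSolution_altList_two_of_Mmat_sq h2 m hj with h | h
    · have := hn_min ⟨by omega, even_two_mul m, h⟩
      omega
    · have := hn_min ⟨by omega, ⟨m + 1, by ring⟩, h⟩
      omega
  · exact h3 (isSquare_three_of_Mmat_altList_two_mul_add_one_sq m hj)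
end
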